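/- Suppose kLT(𝔇) acts coherently on R, the tree u(F; v(E₂),…,v(Eₙ)) acts as the derivation G, and each tree u(E_i; v(E₁)) acts as the derivation H_i. Then u(F; v(E₁),…,v(Eₙ)) acts on R identically to v(E₁)·v(G) − Σ_{i=2}^{n} u(F; v(E₂),…,v(H_i),…,v(Eₙ)) − t(v(E₁), v(G)). -/

import Mathlib

/-- An ordered labeled subtree: a node with a label and an ordered list of children. -/
inductive LSub (D : Type) : Type
  | mk : D → List (LSub D) → LSub D

/-- An ordered rooted tree with unlabeled root and non-root nodes labeled in `D`,
represented by the list of subtrees attached to the root. -/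
abbrev LTree (D : Type) := List (LSub D)

mutual
  /-- Number of nodes of a labeled subtree. -/
  def sizeS {D : Type} : LSub D → Nat
    | .mk _ ts => 1 + sizeL ts
  /-- Total number of (labeled) nodes of a forest. -/
  def sizeL {D : Type} : List (LSub D) → Nat
    | [] => 0
    | t :: ts => sizeS t + sizeL ts
end

mutual
  /-- Graft pending subtrees (given by `f`, indexed by the preorder index of nodes)
  onto a subtree whose own preorder index is `i`; attached subtrees are prepended. -/
  def graftS {D : Type} (f : Nat → List (LSub D)) (i : Nat) : LSub D → LSub D
    | .mk d ts => .mk d (f i ++ graftL f (i + 1) ts)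
  def graftL {D : Type} (f : Nat → List (LSub D)) (i : Nat) : List (LSub D) → List (LSub D)
    | [] => []
    | t :: ts => graftS f i t :: graftL f (i + sizeS t) ts
end

/-- Graft pending subtrees onto a tree; the root has preorder index `0`. -/
def graft {D : Type} (f : Nat → List (LSub D)) (t : LTree D) : LTree D :=
  f 0 ++ graftL f 1 t

/-- All lists of length `m` with entries `< n` (choices of attachment nodes). -/
def choices : Nat → Nat → List (List Nat)
  | 0, _ => [[]]
  | m + 1, n => (List.range n).flatMap fun c => (choices m n).map (c :: ·)

/-- The Grossman–Larson product of two basis trees, as an element of the free module: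
the sum over all ways of attaching the root-subtrees of `T1` to nodes of `T2`. -/
noncomputable def mulT (k : Type) [Semiring k] {D : Type} (T1 T2 : LTree D) :
    LTree D →₀ k :=
  ((choices T1.length (1 + sizeL T2)).map fun c =>
    Finsupp.single
      (graft (fun i => (T1.zip c).filterMap fun p => if p.2 = i then some p.1 else none) T2)
      (1 : k)).sum

/-- `v E`: the two-node tree whose single non-root node is labeled `E`. -/
def vT {D : Type} (E : D) : LTree D := [.mk E []]

/-- `u(E; T₁,…,T_k)`: root has one child labeled `E`, with which the roots of the `Tᵢ`
are identified. -/
def uT {D : Type} (E : D) (Ts : List (LTree D)) : LTree D := [.mk E Ts.flatten]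

/-- `t(T₁,…,T_k)`: identify the roots of the `Tᵢ`. -/
def tT {D : Type} (Ts : List (LTree D)) : LTree D := Ts.flatten

/-- All decompositions of an ordered multiset into a sub-multiset and its complement
(used for the coproduct). -/
def splits {α : Type} : List α → List (List α × List α)
  | [] => [([], [])]
  | a :: l => ((splits l).map fun p => (a :: p.1, p.2)) ++ ((splits l).map fun p => (p.1, a :: p.2))

/-- The labeled node of `T` at position `(i, p)`: the `i`-th root-subtree, then follow
the path `p` of child indices. -/
def subAtL {D : Type} : List (LSub D) → Nat → List Nat → Option (LSub D)
  | [], _, _ => none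
  | t :: _, 0, [] => some t
  | .mk _ cs :: _, 0, j :: p => subAtL cs j p
  | _ :: ts, i + 1, p => subAtL ts i p

/-- Replace the node of `T` at position `(i, p)`: relabel it with `G` and replace the
subtree rooted there (its list of children) by `T'`. -/
def replaceAtL {D : Type} (G : D) (T' : List (LSub D)) :
    List (LSub D) → Nat → List Nat → List (LSub D)
  | [], _, _ => []
  | _ :: ts, 0, [] => .mk G T' :: ts
  | .mk d cs :: ts, 0, j :: p => .mk d (replaceAtL G T' cs j p) :: ts
  | t :: ts, i + 1, p => t :: replaceAtL G T' ts i p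

/-- A `kLT(𝔇)`-module algebra structure on `R` (𝔇 = Der(R)), described via the action
`act` of basis trees: the one-node tree acts as the identity, each tree acts `k`-linearly,
the action is compatible with the tree-attachment product, and satisfies the module
algebra (Hopf) condition with respect to the splitting coproduct. -/
def IsTreeAction (k R : Type) [CommRing k] [CommRing R] [Algebra k R]
    (act : LTree (Derivation k R R) → R → R) : Prop :=
  (∀ f : R, act [] f = f) ∧
  (∀ (T : LTree (Derivation k R R)) (a : k) (f g : R),
    act T (a • f + g) = a • act T f + act T g) ∧
  (∀ (T₁ T₂ : LTree (Derivation k R R)) (f : R),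
    ((mulT k T₁ T₂).sum fun T c => c • act T f) = act T₁ (act T₂ f)) ∧
  (∀ (T : LTree (Derivation k R R)) (f g : R),
    act T (f * g) = ((splits T).map fun q => act q.1 f * act q.2 g).sum)

/-- The `kLT(𝔇)`-module algebra structure `act` is *Leibnitz* if for every tree `T`,
every non-root node (at position `(i, p)`) whose label factors as `r • E`, and every
`s ∈ R`, `T·s = Σ_{(T_i)} (T_{i(1)}·r) (T(i, E, T_{i(2)})·s)`, the coproduct being taken
in the subtree `T_i` rooted at the node. -/
def IsLeibnitz (k R : Type) [CommRing k] [CommRing R] [Algebra k R]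
    (act : LTree (Derivation k R R) → R → R) : Prop :=
  ∀ (T : LTree (Derivation k R R)) (i : Nat) (p : List Nat)
    (D₀ : Derivation k R R) (Ti : List (LSub (Derivation k R R))),
    subAtL T i p = some (LSub.mk D₀ Ti) →
    ∀ (r : R) (E : Derivation k R R), D₀ = r • E →
    ∀ s : R,
      act T s =
        ((splits Ti).map fun q => act q.1 r * act (replaceAtL E q.2 T i p) s).sum

/-- The action `act` is *coherent* if any subtree whose root has a single child and which
acts on `R` as a derivation `E` may be replaced by the two-node tree `v(E)` without
changing the action of the ambient tree. -/
def IsCoherent (k R : Type) [CommRing k] [CommRing R] [Algebra k R]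
    (act : LTree (Derivation k R R) → R → R) : Prop :=
  ∀ (T : LTree (Derivation k R R)) (i : Nat) (p : List Nat)
    (d : Derivation k R R) (cs : List (LSub (Derivation k R R))) (E : Derivation k R R),
    subAtL T i p = some (LSub.mk d cs) →
    (∀ f : R, act [LSub.mk d cs] f = E f) →
    ∀ f : R, act T f = act (replaceAtL E [] T i p) f

/-- A connection on `Der(R)`. -/
def IsConnection (k R : Type) [CommRing k] [CommRing R] [Algebra k R]
    (c : Derivation k R R → Derivation k R R → Derivation k R R) : Prop :=
  (∀ E₁ E₂ F, c (E₁ + E₂) F = c E₁ F + c E₂ F) ∧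
  (∀ E F₁ F₂, c E (F₁ + F₂) = c E F₁ + c E F₂) ∧
  (∀ (f : R) (E F), c (f • E) F = f • c E F) ∧
  (∀ (f : R) (E F), c E (f • F) = f • c E F + (E f) • F)


/-!
By the product axiom, `v(E₁)` acting after `u(F; v(E₂),…,v(Eₙ))` is the action of their
Grossman–Larson product, the sum of the `n + 1` trees obtained by attaching the leaf `E₁` to the
root, to the node `F`, or to one of the leaves `Eᵢ`. Coherence replaces `u(F; v(E₂),…,v(Eₙ))` by
`v(G)`, both as the right factor and inside the root-attached term `t(v(E₁), ·)`, and replaces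
each branch `u(Eᵢ; v(E₁))` by `v(Hᵢ)`. The term with `E₁` attached to `F` is the left-hand side.
-/

section Trees

variable {D : Type}

def LSub.leaf (E : D) : LSub D := .mk E []

lemma flatten_map_singleton {α β : Type*} (g : α → β) (l : List α) :
    (l.map fun a => [g a]).flatten = l.map g := by
  induction l with
  | nil => rfl
  | cons a l ih => simp [ih]

lemma flatten_set_map_singleton {α β : Type*} (g : α → β) (l : List α) (j : ℕ) (x : β) :
    ((l.map fun a => [g a]).set j [x]).flatten = (l.map g).set j x := by
  induction l generalizing j with
  | nil => rfl
  | cons a l ih =>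
    cases j with
    | zero => simp [flatten_map_singleton]
    | succ j => simp [ih]

lemma uT_map_vT (F : D) (l : List D) : uT F (l.map vT) = [.mk F (l.map .leaf)] :=
  congrArg (fun ts => [LSub.mk F ts]) (flatten_map_singleton LSub.leaf l)

lemma uT_set_map_vT (F H : D) (l : List D) (i : ℕ) :
    uT F ((l.map vT).set i (vT H)) = [.mk F ((l.map .leaf).set i (.leaf H))] :=
  congrArg (fun ts => [LSub.mk F ts]) (flatten_set_map_singleton LSub.leaf l i (.leaf H))

lemma sizeL_map_leaf (l : List D) : sizeL (l.map .leaf) = l.length := by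
  induction l with
  | nil => rfl
  | cons a l ih => simp [LSub.leaf, sizeL, sizeS, ih]; omega

lemma subAtL_nil_path (l : List (LSub D)) (i : ℕ) : subAtL l i [] = l[i]? := by
  induction l generalizing i with
  | nil => simp [subAtL]
  | cons t ts ih => cases i <;> simp [subAtL, ih]

lemma replaceAtL_nil_path (G : D) (T' l : List (LSub D)) (i : ℕ) :
    replaceAtL G T' l i [] = l.set i (.mk G T') := by
  induction l generalizing i with
  | nil => simp [replaceAtL]
  | cons t ts ih => cases i <;> simp [replaceAtL, ih]

end Trees

section Grafting

variable {D : Type}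

def graftAt (x : LSub D) (c : ℕ) : ℕ → List (LSub D) := fun i => if c = i then [x] else []

lemma graftL_graftAt_map_leaf_of_lt (x : LSub D) {c i : ℕ} (h : c < i) (l : List D) :
    graftL (graftAt x c) i (l.map .leaf) = l.map .leaf := by
  induction l generalizing i with
  | nil => rfl
  | cons a l ih =>
    simp [LSub.leaf, graftL, graftS, graftAt, Nat.ne_of_lt h, ih (Nat.lt_succ_of_lt h), sizeS,
      sizeL]

lemma graftL_graftAt_map_leaf_add (x : LSub D) (i j : ℕ) (l : List D) (hj : j < l.length) :
    graftL (graftAt x (i + j)) i (l.map .leaf) = (l.map .leaf).set j (.mk l[j] [x]) := by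
  induction l generalizing i j with
  | nil => simp at hj
  | cons a l ih =>
    cases j with
    | zero =>
      simp [LSub.leaf, graftL, graftS, graftAt, sizeS, sizeL,
        graftL_graftAt_map_leaf_of_lt x (Nat.lt_succ_self i) l]
    | succ j =>
      have hne : i + 1 + j ≠ i := by omega
      rw [show i + (j + 1) = i + 1 + j by omega]
      simp [LSub.leaf, graftL, graftS, graftAt, sizeS, sizeL, hne, ih (i + 1) j (by simpa using hj)]

lemma graft_graftAt_singleton (x : LSub D) (c : ℕ) (F : D) (ts : List (LSub D)) :
    graft (graftAt x c) [.mk F ts] =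
      graftAt x c 0 ++ [.mk F (graftAt x c 1 ++ graftL (graftAt x c) 2 ts)] := by
  simp [graft, graftL, graftS]

end Grafting

section Product

variable {k : Type} [Semiring k] {M : Type} [AddCommMonoid M] [Module k M] {D : Type}

lemma sum_mulT_smul (T₁ T₂ : LTree D) (h : LTree D → M) :
    (mulT k T₁ T₂).sum (fun T c => c • h T) =
      ((choices T₁.length (1 + sizeL T₂)).map fun c =>
        h (graft (fun i => (T₁.zip c).filterMap
          fun p => if p.2 = i then some p.1 else none) T₂)).sum := by
  unfold mulT
  induction choices T₁.length (1 + sizeL T₂) with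
  | nil => simp
  | cons c cs ih =>
    rw [List.map_cons, List.sum_cons,
      Finsupp.sum_add_index' (fun _ => by simp) (fun T a b => add_smul a b (h T)), ih,
      Finsupp.sum_single_index (by simp), one_smul, List.map_cons, List.sum_cons]

lemma sum_mulT_vT_smul (E : D) (T : LTree D) (h : LTree D → M) :
    (mulT k (vT E) T).sum (fun T c => c • h T) =
      ((List.range (1 + sizeL T)).map fun c => h (graft (graftAt (.leaf E) c) T)).sum := by
  have hchoices : ∀ n, choices 1 n = (List.range n).map fun c => [c] := by
    intro n
    simp only [choices, List.map_cons, List.map_nil]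
    exact List.flatMap_pure_eq_map (fun c => [c]) (List.range n)
  have hgraft : ∀ c : ℕ, (fun i => ((vT E).zip [c]).filterMap
      fun p => if p.2 = i then some p.1 else none) = graftAt (.leaf E) c := by
    intro c
    funext i
    by_cases hci : c = i <;> simp [vT, LSub.leaf, graftAt, hci]
  rw [sum_mulT_smul, show (vT E).length = 1 from rfl, hchoices, List.map_map]
  simp only [Function.comp_def, hgraft]

lemma sum_mulT_vT_uT_leaves (E F : D) (l : List D) (h : LTree D → M) :
    (mulT k (vT E) [.mk F (l.map .leaf)]).sum (fun T c => c • h T) =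
      h [.leaf E, .mk F (l.map .leaf)] + h [.mk F (.leaf E :: l.map .leaf)] +
        ((List.finRange l.length).map fun i =>
          h [.mk F ((l.map .leaf).set i.1 (.mk (l.get i) [.leaf E]))]).sum := by
  have hsize : 1 + sizeL [LSub.mk F (l.map .leaf)] = l.length + 2 := by
    simp [sizeL, sizeS, sizeL_map_leaf]
    omega
  have hrange : List.range (l.length + 2) =
      0 :: 1 :: (List.finRange l.length).map fun i => i.1 + 2 := by
    rw [List.range_succ_eq_map, List.range_succ_eq_map, ← List.map_coe_finRange_eq_range,
      List.map_cons, List.map_map, List.map_map]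
    simp [Function.comp_def]
  rw [sum_mulT_vT_smul, hsize, hrange]
  simp only [List.map_cons, List.map_map, List.sum_cons, Function.comp_def,
    graft_graftAt_singleton]
  rw [← add_assoc]
  congr 1
  · congr 1 <;> simp [graftAt, graftL_graftAt_map_leaf_of_lt]
  · refine congrArg List.sum (List.map_congr_left fun i _ => ?_)
    rw [Nat.add_comm, graftL_graftAt_map_leaf_add _ 2 i l i.2]
    simp [graftAt, show 2 + i.1 ≠ 1 by omega]

end Product

section Coherence

variable {k R : Type} [CommRing k] [CommRing R] [Algebra k R]
  {act : LTree (Derivation k R R) → R → R}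

lemma IsCoherent.act_set_eq (hcoh : IsCoherent k R act) {T : LTree (Derivation k R R)}
    {i : ℕ} {d E : Derivation k R R} {cs : List (LSub (Derivation k R R))}
    (hi : T[i]? = some (.mk d cs)) (hE : ∀ f, act [.mk d cs] f = E f) (f : R) :
    act T f = act (T.set i (.leaf E)) f := by
  rw [hcoh T i [] d cs E (by rw [subAtL_nil_path, hi]) hE f, replaceAtL_nil_path]
  rfl

lemma IsCoherent.act_set_child_eq (hcoh : IsCoherent k R act)
    {F d E : Derivation k R R} {cs cs' ts : List (LSub (Derivation k R R))} {j : ℕ}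
    (hj : cs[j]? = some (.mk d cs')) (hE : ∀ f, act [.mk d cs'] f = E f) (f : R) :
    act (.mk F cs :: ts) f = act (.mk F (cs.set j (.leaf E)) :: ts) f := by
  rw [hcoh _ 0 [j] d cs' E (by simp [subAtL, subAtL_nil_path, hj]) hE f]
  simp [replaceAtL, replaceAtL_nil_path, LSub.leaf]

end Coherence

/-- **Lemma (BrushAction).** Suppose `kLT(𝔇)` acts coherently on `R`, the tree
`u(F; v(E₂),…,v(Eₙ))` acts as the derivation `G`, and each tree `u(E_i; v(E₁))` acts as
the derivation `H_i` (`i = 2,…,n`; here `Es = [E₂,…,Eₙ]` and `Hs = [H₂,…,Hₙ]`).  Then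
`u(F; v(E₁),…,v(Eₙ))` acts on `R` identically to
`v(E₁)·v(G) − Σ_{i=2}^{n} u(F; v(E₂),…,v(H_i),…,v(Eₙ)) − t(v(E₁), v(G))`. -/
theorem brush_action
    (k R : Type) [Field k] [CommRing R] [Algebra k R]
    (act : LTree (Derivation k R R) → R → R)
    (hact : IsTreeAction k R act)
    (hcoh : IsCoherent k R act)
    (F E₁ : Derivation k R R) (Es Hs : List (Derivation k R R)) (G : Derivation k R R)
    (hlen : Hs.length = Es.length)
    (hG : ∀ f : R, act (uT F (Es.map vT)) f = G f)
    (hH : ∀ (i : Fin Es.length) (f : R),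
      act (uT (Es.get i) [vT E₁]) f = (Hs.get (Fin.cast hlen.symm i)) f) :
    ∀ f : R,
      act (uT F (vT E₁ :: Es.map vT)) f =
        ((mulT k (vT E₁) (vT G)).sum fun T a => a • act T f)
          - ((List.finRange Es.length).map fun i =>
              act (uT F ((Es.map vT).set i.1 (vT (Hs.get (Fin.cast hlen.symm i))))) f).sum
          - act (tT [vT E₁, vT G]) f := by
  intro f
  have hFG : ∀ g, act [.mk F (Es.map .leaf)] g = G g := by
    simpa only [uT_map_vT] using hG
  have hvG : ∀ g, act [.mk F (Es.map .leaf)] g = act (vT G) g :=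
    hcoh.act_set_eq (i := 0) rfl hFG
  have hroot : act [.leaf E₁, .mk F (Es.map .leaf)] f = act (tT [vT E₁, vT G]) f :=
    hcoh.act_set_eq (i := 1) rfl hFG f
  have hbrush : ∀ i : Fin Es.length,
      act [.mk F ((Es.map .leaf).set i (.mk (Es.get i) [.leaf E₁]))] f =
        act (uT F ((Es.map vT).set i (vT (Hs.get (Fin.cast hlen.symm i))))) f := by
    intro i
    rw [hcoh.act_set_child_eq (j := i) (by simp [vT, LSub.leaf]) (hH i) f, uT_set_map_vT,
      List.set_set]
  have hprod := hact.2.2.1 (vT E₁) [.mk F (Es.map .leaf)] f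
  rw [sum_mulT_vT_uT_leaves] at hprod
  rw [← List.map_cons, uT_map_vT, hact.2.2.1, ← hvG, ← hprod, hroot]
  simp only [hbrush]
  abel
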